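/- arXiv:0809.4084 — 3 statements merged into one kernel-verified Lean document; each statement's English description precedes it below -/
import Mathlib

section
/- Vanishing of the principal-value inverse Laplace integral on a left contour: For all real t > 0 and θ > 0, the limit as R → ∞ of ∫_{−R}^{R} e^{(−θ + i s) t} / (−θ + i s) ds exists and equals 0. -/
open Complex Filter MeasureTheory Set Topology

/-!
Since `Re (a + is) < 0`, `e^{(a+is)t} / (a+is) = -∫_t^∞ e^{(a+is)v} dv`. Swapping the two integrals
(Fubini: the integrand is bounded by `e^{(Re a) v}`) turns `∫_α^β … ds` into
`∫_t^∞ (e^{iαv} - e^{iβv}) e^{av} / (iv) dv`. For `t > 0` the weight `e^{av} / (iv)` is integrable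
on `(t, ∞)`, so with `α = -R`, `β = R` both terms tend to `0` by the Riemann–Lebesgue lemma.
-/

theorem tendsto_setIntegral_cexp_mul_I_smul_cocompact {E : Type*} [NormedAddCommGroup E]
    [NormedSpace ℂ E] (f : ℝ → E) {s : Set ℝ} (hs : MeasurableSet s) :
    Tendsto (fun c : ℝ => ∫ v in s, cexp (↑(c * v) * I) • f v) (cocompact ℝ) (𝓝 0) := by
  have hπ : -(2 * Real.pi)⁻¹ ≠ 0 := by simp [Real.pi_ne_zero]
  refine ((Real.zero_at_infty_fourier (s.indicator f)).comp
    (Homeomorph.mulLeft₀ _ hπ).toCocompactMap.cocompact_tendsto').congr fun c => ?_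
  rw [Function.comp_apply, Real.fourier_real_eq_integral_exp_smul, ← integral_indicator hs]
  congr 1 with v
  rw [indicator_smul_apply]
  congr 4
  change -2 * Real.pi * v * (-(2 * Real.pi)⁻¹ * c) = c * v
  field_simp

theorem integral_cexp_add_mul_I_mul (a : ℂ) (α β : ℝ) {v : ℝ} (hv : v ≠ 0) :
    ∫ s in α..β, cexp ((a + s * I) * v) =
      cexp (a * v) * (cexp (↑(β * v) * I) - cexp (↑(α * v) * I)) / (v * I) := by
  have hvI : (v : ℂ) * I ≠ 0 := by simpa using hv
  have hsplit : ∀ s : ℝ, cexp ((a + s * I) * v) = cexp (a * v) * cexp ((v * I) * s) :=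
    fun s => by rw [← Complex.exp_add]; ring_nf
  simp_rw [hsplit, intervalIntegral.integral_const_mul, integral_exp_mul_complex hvI]
  push_cast
  ring_nf

theorem integrableOn_cexp_mul_div_mul_I_Ioi {a : ℂ} (ha : a.re < 0) {t : ℝ} (ht : 0 < t) :
    IntegrableOn (fun v : ℝ => cexp (a * v) / (v * I)) (Ioi t) := by
  refine (integrableOn_exp_mul_complex_Ioi ha t).mul_bdd (c := t⁻¹) (by fun_prop) ?_
  filter_upwards [self_mem_ae_restrict measurableSet_Ioi] with v hv
  have hv0 : 0 < v := ht.trans hv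
  simp only [norm_inv, norm_mul, norm_I, mul_one, norm_real, Real.norm_eq_abs, abs_of_pos hv0]
  exact inv_anti₀ ht hv.le

theorem integrable_prod_cexp_add_mul_I_mul {a : ℂ} (ha : a.re < 0) (α β t : ℝ) :
    Integrable (Function.uncurry fun s v : ℝ => cexp ((a + s * I) * v))
      ((volume.restrict (Ioc α β)).prod (volume.restrict (Ioi t))) := by
  have hbound : Integrable (fun p : ℝ × ℝ => (1 : ℝ) * Real.exp (a.re * p.2))
      ((volume.restrict (Ioc α β)).prod (volume.restrict (Ioi t))) :=
    Integrable.mul_prod (integrableOn_const (C := (1 : ℝ)) measure_Ioc_lt_top.ne)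
      (integrableOn_exp_mul_Ioi ha t)
  refine hbound.mono' (by fun_prop) (ae_of_all _ fun p => ?_)
  simp [Function.uncurry, norm_exp]

theorem integral_cexp_mul_div_eq_setIntegral_Ioi {a : ℂ} (ha : a.re < 0) {t : ℝ} (ht : 0 < t)
    {α β : ℝ} (hαβ : α ≤ β) :
    ∫ s in α..β, cexp ((a + s * I) * t) / (a + s * I) =
      (∫ v in Ioi t, cexp (↑(α * v) * I) • (cexp (a * v) / (v * I))) -
        ∫ v in Ioi t, cexp (↑(β * v) * I) • (cexp (a * v) / (v * I)) := by
  have hre : ∀ s : ℝ, (a + s * I).re < 0 := fun s => by simpa using ha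
  have hint : ∀ c : ℝ, IntegrableOn (fun v : ℝ => cexp (↑(c * v) * I) • (cexp (a * v) / (v * I)))
      (Ioi t) := by
    intro c
    have := (integrableOn_cexp_mul_div_mul_I_Ioi ha ht).bdd_smul (𝕜 := ℂ)
      (φ := fun v : ℝ => cexp (↑(c * v) * I)) 1 (by fun_prop)
      (ae_of_all _ fun v => by simp [norm_exp])
    exact this
  rw [← integral_sub (hint α) (hint β)]
  calc ∫ s in α..β, cexp ((a + s * I) * t) / (a + s * I)
      = -∫ s in Ioc α β, ∫ v in Ioi t, cexp ((a + s * I) * v) := by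
        rw [← intervalIntegral.integral_of_le hαβ, ← intervalIntegral.integral_neg]
        congr 1 with s
        rw [integral_exp_mul_complex_Ioi (hre s), neg_div, neg_neg]
    _ = -∫ v in Ioi t, ∫ s in α..β, cexp ((a + s * I) * v) := by
        rw [integral_integral_swap (integrable_prod_cexp_add_mul_I_mul ha α β t)]
        simp_rw [intervalIntegral.integral_of_le hαβ]
    _ = _ := by
        rw [← integral_neg]
        refine setIntegral_congr_fun measurableSet_Ioi fun v hv => ?_
        rw [integral_cexp_add_mul_I_mul a α β (ht.trans hv).ne']
        simp only [smul_eq_mul]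
        ring

theorem tendsto_integral_cexp_mul_div_atTop {a : ℂ} (ha : a.re < 0) {t : ℝ} (ht : 0 < t) :
    Tendsto (fun R : ℝ => ∫ s in (-R)..R, cexp ((a + s * I) * t) / (a + s * I)) atTop (𝓝 0) := by
  have hRL := tendsto_setIntegral_cexp_mul_I_smul_cocompact
    (fun v : ℝ => cexp (a * v) / (v * I)) (measurableSet_Ioi (a := t))
  have hneg := hRL.comp (tendsto_neg_atTop_atBot.mono_right atBot_le_cocompact)
  have hpos := hRL.mono_left atTop_le_cocompact
  rw [← sub_zero (0 : ℂ)]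
  refine (hneg.sub hpos).congr' ?_
  filter_upwards [eventually_ge_atTop 0] with R hR
  exact (integral_cexp_mul_div_eq_setIntegral_Ioi ha ht (by linarith)).symm

/-- The principal-value inverse Laplace integral on a left contour vanishes:
for `t, θ > 0`, `lim_{R→∞} ∫_{-R}^{R} e^{(−θ+is)t}/(−θ+is) ds = 0`. -/
theorem pv_inverse_laplace_left_contour (t θ : ℝ) (ht : 0 < t) (hθ : 0 < θ) :
    Tendsto (fun R : ℝ =>
      ∫ s in (-R)..R, Complex.exp (((-θ : ℂ) + s * Complex.I) * t) /
        ((-θ : ℂ) + s * Complex.I))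
      atTop (nhds 0) :=
  tendsto_integral_cexp_mul_div_atTop (by simpa using hθ) ht
end

section
/- Shift estimate for the background profile (core of Lemma 5.2): Let 1 ≤ p < ∞, N ≥ 1, d ≥ 2. Let Ū : ℝ → ℝ^N be continuously differentiable with derivative Ū' belonging to L^p(ℝ), and let δ : ℝ^{d−1} → ℝ be measurable with δ ∈ L^p(ℝ^{d−1}). Then the function (x₁, x̃) ↦ Ū(x₁) − Ū(x₁ − δ(x̃)) belongs to L^p(ℝ^d) and its L^p(ℝ^d) norm is at most ‖Ū'‖_{L^p(ℝ)} · ‖δ‖_{L^p(ℝ^{d−1})}. -/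
/-!
Writing `U x - U (x - s) = s • ∫₀¹ U'(x - s + θ s) dθ`, Jensen's inequality in `θ` gives
`‖U x - U (x - s)‖ᵖ ≤ |s|ᵖ ∫₀¹ ‖U'(x - s + θ s)‖ᵖ dθ`; integrating in `x` and using Tonelli and
translation invariance of Lebesgue measure yields `‖U - U(· - s)‖ₚᵖ ≤ |s|ᵖ ‖U'‖ₚᵖ`.
Taking `s = δ(x̃)` and integrating in `x̃` gives the estimate.
-/

open MeasureTheory Set

lemma enorm_integral_rpow_le_lintegral_enorm_rpow {α E : Type*} [MeasurableSpace α]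
    [NormedAddCommGroup E] [NormedSpace ℝ E] {μ : Measure α} [IsProbabilityMeasure μ]
    {F : α → E} (hF : AEStronglyMeasurable F μ) {p : ℝ} (hp : 1 ≤ p) :
    ‖∫ a, F a ∂μ‖ₑ ^ p ≤ ∫⁻ a, ‖F a‖ₑ ^ p ∂μ := by
  have hp0 : 0 < p := zero_lt_one.trans_le hp
  have h : ‖∫ a, F a ∂μ‖ₑ ≤ eLpNorm' F p μ := by
    calc ‖∫ a, F a ∂μ‖ₑ ≤ ∫⁻ a, ‖F a‖ₑ ∂μ := enorm_integral_le_lintegral_enorm F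
      _ = eLpNorm' F 1 μ := by simp [eLpNorm']
      _ ≤ eLpNorm' F p μ := eLpNorm'_le_eLpNorm'_of_exponent_le one_pos hp μ hF
  calc ‖∫ a, F a ∂μ‖ₑ ^ p ≤ eLpNorm' F p μ ^ p := ENNReal.rpow_le_rpow h hp0.le
    _ = ∫⁻ a, ‖F a‖ₑ ^ p ∂μ := by
      rw [eLpNorm', ← ENNReal.rpow_mul, one_div_mul_cancel hp0.ne', ENNReal.rpow_one]

instance : IsProbabilityMeasure (volume.restrict (Ioc (0 : ℝ) 1)) := ⟨by simp⟩

variable {E : Type*} [NormedAddCommGroup E] {U : ℝ → E} {p : ℝ}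

lemma stronglyMeasurable_sub_comp_sub {β : Type*} [MeasurableSpace β] (hU : Continuous U)
    {δ : β → ℝ} (hδ : Measurable δ) :
    StronglyMeasurable fun z : ℝ × β => U z.1 - U (z.1 - δ z.2) :=
  (hU.comp_stronglyMeasurable measurable_fst.stronglyMeasurable).sub
    (hU.comp_stronglyMeasurable (measurable_fst.sub (hδ.comp measurable_snd)).stronglyMeasurable)

variable [NormedSpace ℝ E] [CompleteSpace E]

lemma enorm_sub_comp_sub_rpow_le (hp : 1 ≤ p) (hU : ContDiff ℝ 1 U) (x s : ℝ) :
    ‖U x - U (x - s)‖ₑ ^ p ≤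
      ‖s‖ₑ ^ p * ∫⁻ θ in Ioc 0 1, ‖deriv U (s * θ + (x - s))‖ₑ ^ p := by
  have hU' : Continuous (deriv U) := hU.continuous_deriv le_rfl
  have hftc : U x - U (x - s) = s • ∫ θ in (0 : ℝ)..1, deriv U (s * θ + (x - s)) := by
    rw [intervalIntegral.smul_integral_comp_mul_add, mul_zero, zero_add, mul_one, add_sub_cancel,
      intervalIntegral.integral_deriv_eq_sub
        (fun t _ => (hU.differentiable one_ne_zero).differentiableAt)
        (hU'.intervalIntegrable _ _)]
  rw [hftc, enorm_smul, ENNReal.mul_rpow_of_nonneg _ _ (zero_le_one.trans hp),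
    intervalIntegral.integral_of_le zero_le_one]
  gcongr
  exact enorm_integral_rpow_le_lintegral_enorm_rpow
    (hU'.comp (by fun_prop)).aestronglyMeasurable hp

lemma lintegral_enorm_sub_comp_sub_rpow_le (hp : 1 ≤ p) (hU : ContDiff ℝ 1 U) (s : ℝ) :
    ∫⁻ x, ‖U x - U (x - s)‖ₑ ^ p ≤ ‖s‖ₑ ^ p * ∫⁻ t, ‖deriv U t‖ₑ ^ p := by
  have hg : Measurable fun t => ‖deriv U t‖ₑ ^ p :=
    (hU.continuous_deriv le_rfl).enorm.measurable.pow_const p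
  have htransl (θ : ℝ) : ∫⁻ x, ‖deriv U (s * θ + (x - s))‖ₑ ^ p = ∫⁻ t, ‖deriv U t‖ₑ ^ p := by
    simpa only [add_sub_left_comm, add_comm, add_sub_assoc] using
      lintegral_add_right_eq_self (fun t => ‖deriv U t‖ₑ ^ p) (s * θ - s)
  calc ∫⁻ x, ‖U x - U (x - s)‖ₑ ^ p
      ≤ ∫⁻ x, ‖s‖ₑ ^ p * ∫⁻ θ in Ioc 0 1, ‖deriv U (s * θ + (x - s))‖ₑ ^ p :=
        lintegral_mono fun x => enorm_sub_comp_sub_rpow_le hp hU x s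
    _ = ‖s‖ₑ ^ p * ∫⁻ θ in Ioc 0 1, ∫⁻ x, ‖deriv U (s * θ + (x - s))‖ₑ ^ p := by
        rw [lintegral_const_mul' _ _ (by finiteness), lintegral_lintegral_swap]
        exact (hg.comp (by fun_prop)).aemeasurable
    _ = ‖s‖ₑ ^ p * ∫⁻ t, ‖deriv U t‖ₑ ^ p := by
        simp only [htransl, setLIntegral_const, Real.volume_Ioc, sub_zero, ENNReal.ofReal_one,
          mul_one]

lemma lintegral_prod_enorm_sub_comp_sub_rpow_le {β : Type*} [MeasurableSpace β] {ν : Measure β}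
    [SFinite ν] (hp : 1 ≤ p) (hU : ContDiff ℝ 1 U) {δ : β → ℝ} (hδ : Measurable δ) :
    ∫⁻ z, ‖U z.1 - U (z.1 - δ z.2)‖ₑ ^ p ∂(volume.prod ν) ≤
      (∫⁻ t, ‖deriv U t‖ₑ ^ p) * ∫⁻ y, ‖δ y‖ₑ ^ p ∂ν := by
  rw [lintegral_prod_symm _
    ((stronglyMeasurable_sub_comp_sub hU.continuous hδ).aestronglyMeasurable.enorm.pow_const p)]
  calc ∫⁻ y, (∫⁻ x, ‖U x - U (x - δ y)‖ₑ ^ p) ∂ν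
      ≤ ∫⁻ y, ‖δ y‖ₑ ^ p * (∫⁻ t, ‖deriv U t‖ₑ ^ p) ∂ν :=
        lintegral_mono fun y => lintegral_enorm_sub_comp_sub_rpow_le hp hU (δ y)
    _ = (∫⁻ t, ‖deriv U t‖ₑ ^ p) * ∫⁻ y, ‖δ y‖ₑ ^ p ∂ν := by
        rw [lintegral_mul_const _ (hδ.enorm.pow_const p), mul_comm]

lemma eLpNorm'_prod_sub_comp_sub_le {β : Type*} [MeasurableSpace β] {ν : Measure β}
    [SFinite ν] (hp : 1 ≤ p) (hU : ContDiff ℝ 1 U) {δ : β → ℝ} (hδ : Measurable δ) :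
    eLpNorm' (fun z : ℝ × β => U z.1 - U (z.1 - δ z.2)) p (volume.prod ν) ≤
      eLpNorm' (deriv U) p volume * eLpNorm' δ p ν := by
  have hp_inv : 0 ≤ 1 / p := by positivity
  rw [eLpNorm', eLpNorm', eLpNorm', ← ENNReal.mul_rpow_of_nonneg _ _ hp_inv]
  exact ENNReal.rpow_le_rpow (lintegral_prod_enorm_sub_comp_sub_rpow_le hp hU hδ) hp_inv

theorem shift_estimate_general (p : ℝ) (hp : 1 ≤ p) (N d : ℕ)
    (U : ℝ → EuclideanSpace ℝ (Fin N)) (hU : ContDiff ℝ 1 U)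
    (hU' : MemLp (deriv U) (ENNReal.ofReal p) volume)
    (δ : (Fin (d - 1) → ℝ) → ℝ) (hδmeas : Measurable δ)
    (hδ : MemLp δ (ENNReal.ofReal p) volume) :
    MemLp (fun x : ℝ × (Fin (d - 1) → ℝ) => U x.1 - U (x.1 - δ x.2))
        (ENNReal.ofReal p) volume ∧
      eLpNorm (fun x : ℝ × (Fin (d - 1) → ℝ) => U x.1 - U (x.1 - δ x.2))
          (ENNReal.ofReal p) volume
        ≤ eLpNorm (deriv U) (ENNReal.ofReal p) volume *
            eLpNorm δ (ENNReal.ofReal p) volume := by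
  have hp0 : ENNReal.ofReal p ≠ 0 := (ENNReal.ofReal_pos.2 (zero_lt_one.trans_le hp)).ne'
  have hbound : eLpNorm (fun x : ℝ × (Fin (d - 1) → ℝ) => U x.1 - U (x.1 - δ x.2))
      (ENNReal.ofReal p) volume ≤
        eLpNorm (deriv U) (ENNReal.ofReal p) volume * eLpNorm δ (ENNReal.ofReal p) volume := by
    simp only [eLpNorm_eq_eLpNorm' hp0 ENNReal.ofReal_ne_top,
      ENNReal.toReal_ofReal (zero_le_one.trans hp), Measure.volume_eq_prod]
    exact eLpNorm'_prod_sub_comp_sub_le hp hU hδmeas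
  refine ⟨⟨?_, hbound.trans_lt (ENNReal.mul_lt_top hU'.eLpNorm_lt_top hδ.eLpNorm_lt_top)⟩, hbound⟩
  exact (stronglyMeasurable_sub_comp_sub hU.continuous hδmeas).aestronglyMeasurable

/-- Shift estimate for the background profile: if `Ū ∈ C¹(ℝ, ℝ^N)` with `Ū' ∈ Lᵖ(ℝ)` and
`δ ∈ Lᵖ(ℝ^{d−1})` is measurable, then `(x₁, x̃) ↦ Ū(x₁) − Ū(x₁ − δ(x̃))` is in `Lᵖ(ℝ^d)`
with norm at most `‖Ū'‖_{Lᵖ} · ‖δ‖_{Lᵖ}`. -/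
theorem shift_estimate (p : ℝ) (hp : 1 ≤ p) (N d : ℕ) (hN : 1 ≤ N) (hd : 2 ≤ d)
    (U : ℝ → EuclideanSpace ℝ (Fin N)) (hU : ContDiff ℝ 1 U)
    (hU' : MemLp (deriv U) (ENNReal.ofReal p) volume)
    (δ : (Fin (d - 1) → ℝ) → ℝ) (hδmeas : Measurable δ)
    (hδ : MemLp δ (ENNReal.ofReal p) volume) :
    MemLp (fun x : ℝ × (Fin (d - 1) → ℝ) => U x.1 - U (x.1 - δ x.2))
        (ENNReal.ofReal p) volume ∧
      eLpNorm (fun x : ℝ × (Fin (d - 1) → ℝ) => U x.1 - U (x.1 - δ x.2))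
          (ENNReal.ofReal p) volume
        ≤ eLpNorm (deriv U) (ENNReal.ofReal p) volume *
            eLpNorm δ (ENNReal.ofReal p) volume :=
  shift_estimate_general p hp N d U hU hU' δ hδmeas hδ
end

section
/- Second-order Chapman–Enskog solvability identity (Appendix A, Claim, second order): In the block-matrix setup below, for all indices j, k, the first (scalar) component of the vector i · (a*_j · I − A^j) · V¹_k ∈ ℂ^{1+r} equals f^j_v · q_v⁻¹ · (g^k_u − g^k_v q_v⁻¹ q_u + a*_k · q_v⁻¹ q_u). Consequently, setting b*_{jk} := −(1/2) · ( f^j_v q_v⁻¹ (g^k_u − g^k_v q_v⁻¹ q_u + a*_k q_v⁻¹ q_u) + f^k_v q_v⁻¹ (g^j_u − g^j_v q_v⁻¹ q_u + a*_j q_v⁻¹ q_u) ), the first component of 2·b*_{jk}·V⁰ + i (a*_j I − A^j) V¹_k + i (a*_k I − A^k) V¹_j is zero. -/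
open Matrix

/-! Only the first row `(f_u, f_v)` of `A` enters the scalar component, and on a vector
`(1, -q_v⁻¹ q_u + i q_v⁻¹ w)` it gives `f_u - f_v q_v⁻¹ q_u + i f_v q_v⁻¹ w`. The first two terms
are exactly `a*`, so `i (a* - ·)` leaves `-i² f_v q_v⁻¹ w = f_v q_v⁻¹ w`; the second claim is then
the definition of `b*_{jk}`. -/

theorem fromBlocks_sub_mulVec_sumElim_inl {R n : Type*} [CommRing R] [Fintype n] [DecidableEq n]
    (a fu : R) (fv : Matrix Unit n R) (gu : Matrix n Unit R) (gv : Matrix n n R)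
    (M : Matrix n Unit R) :
    ((a • (1 : Matrix (Unit ⊕ n) (Unit ⊕ n) R) - fromBlocks (of fun _ _ => fu) fv gu gv) *ᵥ
        Sum.elim (fun _ => 1) (fun i => M i ())) (Sum.inl ())
      = a - fu - (fv * M) () () := by
  rw [sub_mulVec, smul_mulVec, one_mulVec, fromBlocks_mulVec]
  simp [mulVec, dotProduct, mul_apply, sub_sub]

theorem I_smul_fromBlocks_sub_mulVec_sumElim_inl {n : Type*} [Fintype n] [DecidableEq n]
    (fu : ℂ) (fv : Matrix Unit n ℂ) (gu : Matrix n Unit ℂ) (gv : Matrix n n ℂ)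
    (P N : Matrix n Unit ℂ) (a : ℂ) (ha : a = fu - (fv * P) () ()) :
    (Complex.I • ((a • (1 : Matrix (Unit ⊕ n) (Unit ⊕ n) ℂ) -
        fromBlocks (of fun _ _ => fu) fv gu gv) *ᵥ
        Sum.elim (fun _ => 1) (fun i => (-P + Complex.I • N) i ()))) (Sum.inl ())
      = (fv * N) () () := by
  rw [Pi.smul_apply, fromBlocks_sub_mulVec_sumElim_inl, Matrix.mul_add, Matrix.mul_neg,
    Matrix.mul_smul]
  simp only [Matrix.add_apply, Matrix.neg_apply, Matrix.smul_apply, smul_eq_mul, ha]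
  linear_combination -(fv * N) () () * Complex.I_mul_I

theorem chapman_enskog_second_order_general (r : ℕ)
    (fj_u fk_u : ℂ) (fj_v fk_v : Matrix Unit (Fin r) ℂ)
    (gj_u gk_u : Matrix (Fin r) Unit ℂ) (gj_v gk_v : Matrix (Fin r) (Fin r) ℂ)
    (q_u : Matrix (Fin r) Unit ℂ) (q_v : Matrix (Fin r) (Fin r) ℂ) :
    let Aj : Matrix (Unit ⊕ Fin r) (Unit ⊕ Fin r) ℂ :=
      Matrix.fromBlocks (Matrix.of fun _ _ => fj_u) fj_v gj_u gj_v
    let Ak : Matrix (Unit ⊕ Fin r) (Unit ⊕ Fin r) ℂ :=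
      Matrix.fromBlocks (Matrix.of fun _ _ => fk_u) fk_v gk_u gk_v
    let aj : ℂ := fj_u - (fj_v * q_v⁻¹ * q_u) () ()
    let ak : ℂ := fk_u - (fk_v * q_v⁻¹ * q_u) () ()
    let V0 : (Unit ⊕ Fin r) → ℂ :=
      Sum.elim (fun _ => 1) (fun i => (-(q_v⁻¹ * q_u)) i ())
    let V1j : (Unit ⊕ Fin r) → ℂ :=
      Sum.elim (fun _ => 1) (fun i =>
        (-(q_v⁻¹ * q_u) +
          Complex.I • (q_v⁻¹ * (gj_u - gj_v * q_v⁻¹ * q_u + aj • (q_v⁻¹ * q_u)))) i ())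
    let V1k : (Unit ⊕ Fin r) → ℂ :=
      Sum.elim (fun _ => 1) (fun i =>
        (-(q_v⁻¹ * q_u) +
          Complex.I • (q_v⁻¹ * (gk_u - gk_v * q_v⁻¹ * q_u + ak • (q_v⁻¹ * q_u)))) i ())
    let bjk : ℂ := -(1 / 2) *
      ((fj_v * q_v⁻¹ * (gk_u - gk_v * q_v⁻¹ * q_u + ak • (q_v⁻¹ * q_u))) () () +
       (fk_v * q_v⁻¹ * (gj_u - gj_v * q_v⁻¹ * q_u + aj • (q_v⁻¹ * q_u))) () ())
    (Complex.I • ((aj • (1 : Matrix (Unit ⊕ Fin r) (Unit ⊕ Fin r) ℂ) - Aj) *ᵥ V1k))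
        (Sum.inl ())
      = (fj_v * q_v⁻¹ * (gk_u - gk_v * q_v⁻¹ * q_u + ak • (q_v⁻¹ * q_u))) () () ∧
    ((2 * bjk) • V0 +
        Complex.I • ((aj • (1 : Matrix (Unit ⊕ Fin r) (Unit ⊕ Fin r) ℂ) - Aj) *ᵥ V1k) +
        Complex.I • ((ak • (1 : Matrix (Unit ⊕ Fin r) (Unit ⊕ Fin r) ℂ) - Ak) *ᵥ V1j))
        (Sum.inl ()) = 0 := by
  intro Aj Ak aj ak V0 V1j V1k bjk
  have hj : (Complex.I • ((aj • (1 : Matrix (Unit ⊕ Fin r) (Unit ⊕ Fin r) ℂ) - Aj) *ᵥ V1k))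
      (Sum.inl ()) = (fj_v * q_v⁻¹ * (gk_u - gk_v * q_v⁻¹ * q_u + ak • (q_v⁻¹ * q_u))) () () := by
    rw [Matrix.mul_assoc fj_v]
    exact I_smul_fromBlocks_sub_mulVec_sumElim_inl fj_u fj_v gj_u gj_v _ _ aj
      (by rw [← Matrix.mul_assoc])
  have hk : (Complex.I • ((ak • (1 : Matrix (Unit ⊕ Fin r) (Unit ⊕ Fin r) ℂ) - Ak) *ᵥ V1j))
      (Sum.inl ()) = (fk_v * q_v⁻¹ * (gj_u - gj_v * q_v⁻¹ * q_u + aj • (q_v⁻¹ * q_u))) () () := by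
    rw [Matrix.mul_assoc fk_v]
    exact I_smul_fromBlocks_sub_mulVec_sumElim_inl fk_u fk_v gk_u gk_v _ _ ak
      (by rw [← Matrix.mul_assoc])
  refine ⟨hj, ?_⟩
  rw [Pi.add_apply, Pi.add_apply, hj, hk, Pi.smul_apply]
  simp only [V0, bjk, Sum.elim_inl, smul_eq_mul]
  ring

/-- Second-order Chapman–Enskog solvability identity: the first (scalar) component of
`i (a*_j I − A^j) V¹_k` equals `f^j_v q_v⁻¹ (g^k_u − g^k_v q_v⁻¹ q_u + a*_k q_v⁻¹ q_u)`,
and consequently the first component of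
`2 b*_{jk} V⁰ + i (a*_j I − A^j) V¹_k + i (a*_k I − A^k) V¹_j` vanishes. -/
theorem chapman_enskog_second_order (r : ℕ) (hr : 1 ≤ r)
    (fj_u fk_u : ℂ) (fj_v fk_v : Matrix Unit (Fin r) ℂ)
    (gj_u gk_u : Matrix (Fin r) Unit ℂ) (gj_v gk_v : Matrix (Fin r) (Fin r) ℂ)
    (q_u : Matrix (Fin r) Unit ℂ) (q_v : Matrix (Fin r) (Fin r) ℂ)
    (hq : IsUnit q_v.det) :
    let Aj : Matrix (Unit ⊕ Fin r) (Unit ⊕ Fin r) ℂ :=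
      Matrix.fromBlocks (Matrix.of fun _ _ => fj_u) fj_v gj_u gj_v
    let Ak : Matrix (Unit ⊕ Fin r) (Unit ⊕ Fin r) ℂ :=
      Matrix.fromBlocks (Matrix.of fun _ _ => fk_u) fk_v gk_u gk_v
    let aj : ℂ := fj_u - (fj_v * q_v⁻¹ * q_u) () ()
    let ak : ℂ := fk_u - (fk_v * q_v⁻¹ * q_u) () ()
    let V0 : (Unit ⊕ Fin r) → ℂ :=
      Sum.elim (fun _ => 1) (fun i => (-(q_v⁻¹ * q_u)) i ())
    let V1j : (Unit ⊕ Fin r) → ℂ :=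
      Sum.elim (fun _ => 1) (fun i =>
        (-(q_v⁻¹ * q_u) +
          Complex.I • (q_v⁻¹ * (gj_u - gj_v * q_v⁻¹ * q_u + aj • (q_v⁻¹ * q_u)))) i ())
    let V1k : (Unit ⊕ Fin r) → ℂ :=
      Sum.elim (fun _ => 1) (fun i =>
        (-(q_v⁻¹ * q_u) +
          Complex.I • (q_v⁻¹ * (gk_u - gk_v * q_v⁻¹ * q_u + ak • (q_v⁻¹ * q_u)))) i ())
    let bjk : ℂ := -(1 / 2) *
      ((fj_v * q_v⁻¹ * (gk_u - gk_v * q_v⁻¹ * q_u + ak • (q_v⁻¹ * q_u))) () () +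
       (fk_v * q_v⁻¹ * (gj_u - gj_v * q_v⁻¹ * q_u + aj • (q_v⁻¹ * q_u))) () ())
    (Complex.I • ((aj • (1 : Matrix (Unit ⊕ Fin r) (Unit ⊕ Fin r) ℂ) - Aj) *ᵥ V1k))
        (Sum.inl ())
      = (fj_v * q_v⁻¹ * (gk_u - gk_v * q_v⁻¹ * q_u + ak • (q_v⁻¹ * q_u))) () () ∧
    ((2 * bjk) • V0 +
        Complex.I • ((aj • (1 : Matrix (Unit ⊕ Fin r) (Unit ⊕ Fin r) ℂ) - Aj) *ᵥ V1k) +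
        Complex.I • ((ak • (1 : Matrix (Unit ⊕ Fin r) (Unit ⊕ Fin r) ℂ) - Ak) *ᵥ V1j))
        (Sum.inl ()) = 0 :=
  chapman_enskog_second_order_general r fj_u fk_u fj_v fk_v gj_u gk_u gj_v gk_v q_u q_v
end
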